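/- arXiv:1210.4230 — 2 statements merged into one kernel-verified Lean document; each statement's English description precedes it below -/
import Mathlib

section
/- Every equivalence class T with respect to connectedness inside an (s,t)-switchable set S is itself an (s,t)-switchable set. -/
/-!
A switch `sw i a b` of two members of `S` differs from `a` in at most one coordinate, so it
stays in the connectedness class of `a`. For `s`-equivalence it suffices that `s`-equivalent
members `a`, `b` of `S` are connected. Move `a` towards `b` one unit at a time, from a
coordinate `j < s` where `a` exceeds `b` to a coordinate `i < s` where it falls short. The
result is an `s`-equivalent member of `S` at Hamming distance `2`, and the switch in
coordinate `i` or `j` joins the two by a path of length `2`; if both coordinates are `≥ t`,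
the unit makes a detour through coordinate `0`.
-/

open Finset

/-- The set of indices: `a i` (a value in `Fin (r i)`) represents the entry `a_i = (a i) + 1`
of an index in `[r 1] × ⋯ × [r n]`.  So `0` corresponds to the entry `1` and `r i - 1`
to the entry `r i`. -/
abbrev Idx (n : ℕ) (r : Fin n → ℕ) := ∀ i : Fin n, Fin (r i)

/-- `a` and `b` are `s`-equivalent: equal sums of the first `s` components and equal
remaining components. -/
def sEquiv (n s : ℕ) (r : Fin n → ℕ) (a b : Idx n r) : Prop :=
  (∑ i ∈ Finset.univ.filter (fun i : Fin n => (i : ℕ) < s), (a i : ℕ)) =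
    (∑ i ∈ Finset.univ.filter (fun i : Fin n => (i : ℕ) < s), (b i : ℕ)) ∧
  ∀ i : Fin n, s ≤ (i : ℕ) → a i = b i

/-- The switch of `a` and `b` with respect to a single component `i`. -/
def sw {n : ℕ} {r : Fin n → ℕ} (i : Fin n) (a b : Idx n r) : Idx n r :=
  fun j => if j = i then b j else a j

/-- The switch of `a` and `b` with respect to a set `L` of components. -/
def swL {n : ℕ} {r : Fin n → ℕ} (L : Finset (Fin n)) (a b : Idx n r) : Idx n r :=
  fun j => if j ∈ L then b j else a j

/-- An `(s,t)`-switchable subset of the set of indices. -/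
def Switchable (n s t : ℕ) (r : Fin n → ℕ) (S : Set (Idx n r)) : Prop :=
  (∀ a b, a ∈ S → b ∈ S → hammingDist a b = 2 →
    ∀ i : Fin n, (i : ℕ) < t → sw i a b ∈ S) ∧
  (∀ a b, a ∈ S → sEquiv n s r a b → b ∈ S)

/-- `c 0, c 1, …, c k` is a path in `S`: all members lie in `S` and consecutive members
have Hamming distance `1`. -/
def IsPathIn {n : ℕ} {r : Fin n → ℕ} (S : Set (Idx n r)) (c : ℕ → Idx n r) (k : ℕ) : Prop :=
  (∀ j ≤ k, c j ∈ S) ∧ ∀ j < k, hammingDist (c j) (c (j + 1)) = 1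

/-- `a` and `b` are connected in `S`. -/
def ConnectedIn {n : ℕ} {r : Fin n → ℕ} (S : Set (Idx n r)) (a b : Idx n r) : Prop :=
  ∃ k c, c 0 = a ∧ c k = b ∧ IsPathIn S c k

open Function Relation

theorem hammingDist_le_card_of_eq_off {ι : Type*} {β : ι → Type*} [Fintype ι]
    [∀ i, DecidableEq (β i)] {x y : ∀ i, β i} (L : Finset ι) (h : ∀ k ∉ L, x k = y k) :
    hammingDist x y ≤ L.card :=
  Finset.card_le_card fun k hk => by
    by_contra hkL
    exact (Finset.mem_filter.1 hk).2 (h k hkL)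

theorem Finset.exists_lt_of_sum_eq_of_ne {ι M : Type*} [AddCommMonoid M] [LinearOrder M]
    [IsOrderedCancelAddMonoid M] {F : Finset ι} {f g : ι → M}
    (hsum : ∑ k ∈ F, f k = ∑ k ∈ F, g k) (hne : ∃ k ∈ F, f k ≠ g k) :
    ∃ k ∈ F, f k < g k := by
  by_contra! hle
  obtain ⟨k, hk, hfg⟩ := hne
  exact hfg ((Finset.sum_eq_sum_iff_of_le hle).1 hsum.symm k hk).symm

variable {n s t : ℕ} {r : Fin n → ℕ} {S : Set (Idx n r)}

theorem hammingDist_sw_le_one (i : Fin n) (a b : Idx n r) : hammingDist a (sw i a b) ≤ 1 :=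
  hammingDist_le_card_of_eq_off {i} fun k hk => by simp_all [sw]

/-- Steps of Hamming distance `0` are allowed, so that `ReflTransGen (StepIn S)` needs no
case distinction when a switch or a transfer happens to change nothing. -/
def StepIn (S : Set (Idx n r)) (x y : Idx n r) : Prop :=
  y ∈ S ∧ hammingDist x y ≤ 1

namespace ConnectedIn

theorem right_mem {a b : Idx n r} (h : ConnectedIn S a b) : b ∈ S := by
  obtain ⟨k, c, -, rfl, hc, -⟩ := h
  exact hc k le_rfl

theorem tail {a b c : Idx n r} (h : ConnectedIn S a b) (hc : c ∈ S)
    (hbc : hammingDist b c = 1) : ConnectedIn S a c := by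
  obtain ⟨k, p, hp0, rfl, hmem, hstep⟩ := h
  refine ⟨k + 1, fun m => if m ≤ k then p m else c, by simpa using hp0, by simp, ?_, ?_⟩
  · intro m _
    by_cases hmk : m ≤ k
    · simpa [hmk] using hmem m hmk
    · simpa [hmk] using hc
  · intro m hm
    rcases Nat.lt_or_ge m k with hmk | hmk
    · simpa [hmk.le, Nat.succ_le_of_lt hmk] using hstep m hmk
    · obtain rfl : m = k := by omega
      simpa using hbc

theorem tail_stepIn {a b c : Idx n r} (h : ConnectedIn S a b) (hbc : StepIn S b c) :
    ConnectedIn S a c := by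
  obtain ⟨hc, hd⟩ := hbc
  rcases Nat.le_one_iff_eq_zero_or_eq_one.1 hd with h0 | h1
  · rwa [← hammingDist_eq_zero.1 h0]
  · exact h.tail hc h1

theorem trans_reflTransGen {a b c : Idx n r} (h : ConnectedIn S a b)
    (hbc : ReflTransGen (StepIn S) b c) : ConnectedIn S a c := by
  induction hbc with
  | refl => exact h
  | tail _ hstep ih => exact ih.tail_stepIn hstep

end ConnectedIn

theorem sEquiv.symm {a b : Idx n r} (h : sEquiv n s r a b) : sEquiv n s r b a :=
  ⟨h.1.symm, fun i hi => (h.2 i hi).symm⟩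

theorem sEquiv.trans {a b c : Idx n r} (hab : sEquiv n s r a b) (hbc : sEquiv n s r b c) :
    sEquiv n s r a c :=
  ⟨hab.1.trans hbc.1, fun i hi => (hab.2 i hi).trans (hbc.2 i hi)⟩

theorem sEquiv_of_eq_off_pair {a b : Idx n r} {i j : Fin n} (hij : i ≠ j) (his : (i : ℕ) < s)
    (hjs : (j : ℕ) < s) (hsum : (a i : ℕ) + a j = b i + b j)
    (hab : ∀ k, k ≠ i → k ≠ j → a k = b k) : sEquiv n s r a b := by
  refine ⟨?_, fun k hk => hab k (by rintro rfl; omega) (by rintro rfl; omega)⟩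
  have hpair : {i, j} ⊆ Finset.univ.filter (fun k : Fin n => (k : ℕ) < s) := by
    simp [Finset.insert_subset_iff, his, hjs]
  rw [← Finset.sum_sdiff hpair, ← Finset.sum_sdiff hpair (f := fun k => (b k : ℕ)),
    Finset.sum_pair hij, Finset.sum_pair hij, hsum]
  congr 1
  refine Finset.sum_congr rfl fun k hk => ?_
  simp only [Finset.mem_sdiff, Finset.mem_insert, Finset.mem_singleton, not_or] at hk
  rw [hab k hk.2.1 hk.2.2]

theorem exists_lt_lt_of_sEquiv {a b : Idx n r} (hab : sEquiv n s r a b) (hne : a ≠ b) :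
    ∃ i j : Fin n, (i : ℕ) < s ∧ (j : ℕ) < s ∧ (a i : ℕ) < b i ∧ (b j : ℕ) < a j := by
  obtain ⟨k, hk⟩ := Function.ne_iff.1 hne
  have hks : (k : ℕ) < s := by
    by_contra! hks
    exact hk (hab.2 k hks)
  have hne' : ∃ k ∈ Finset.univ.filter (fun k : Fin n => (k : ℕ) < s), (a k : ℕ) ≠ b k :=
    ⟨k, by simpa using hks, fun h => hk (Fin.ext h)⟩
  obtain ⟨i, hi, hlt⟩ := Finset.exists_lt_of_sum_eq_of_ne hab.1 hne'
  obtain ⟨j, hj, hgt⟩ := Finset.exists_lt_of_sum_eq_of_ne hab.1.symm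
    (hne'.imp fun _ => And.imp_right Ne.symm)
  exact ⟨i, j, (Finset.mem_filter.1 hi).2, (Finset.mem_filter.1 hj).2, hlt, hgt⟩

/-- The path goes through the switch `sw i a c`. -/
theorem reflTransGen_of_eq_off_pair (hS : Switchable n s t r S) {a c : Idx n r}
    (ha : a ∈ S) (hc : c ∈ S) {i j : Fin n} (hit : (i : ℕ) < t)
    (hac : ∀ k, k ≠ i → k ≠ j → a k = c k) : ReflTransGen (StepIn S) a c := by
  have hle : hammingDist a c ≤ 2 :=
    (hammingDist_le_card_of_eq_off {i, j} (by simpa using hac)).trans Finset.card_le_two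
  rcases Nat.lt_or_ge (hammingDist a c) 2 with hlt | hge
  · exact .single ⟨hc, by omega⟩
  have hsw : sw i a c ∈ S := hS.1 a c ha hc (by omega) i hit
  have hswc : hammingDist (sw i a c) c ≤ 1 :=
    hammingDist_le_card_of_eq_off {j} fun k hk => by
      by_cases hki : k = i
      · simp [sw, hki]
      · simp only [sw, if_neg hki]
        exact hac k hki (by simpa using hk)
  exact (ReflTransGen.single ⟨hsw, hammingDist_sw_le_one i a c⟩).tail ⟨hc, hswc⟩

/-- When neither `i` nor `j` is below `t`, the unit is routed through coordinate `0`, which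
has room to go up or down since `2 ≤ r 0`. -/
theorem reflTransGen_of_unit_transfer (hS : Switchable n s t r S) (ht : 0 < t)
    (hr : ∀ k, 2 ≤ r k) {a c : Idx n r} (ha : a ∈ S) {i j : Fin n} (hij : i ≠ j)
    (his : (i : ℕ) < s) (hjs : (j : ℕ) < s) (hci : (c i : ℕ) = a i + 1)
    (hcj : (c j : ℕ) + 1 = a j) (hac : ∀ k, k ≠ i → k ≠ j → a k = c k) :
    ReflTransGen (StepIn S) a c := by
  have hc : c ∈ S := hS.2 a c ha (sEquiv_of_eq_off_pair hij his hjs (by omega) hac)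
  by_cases hit : (i : ℕ) < t
  · exact reflTransGen_of_eq_off_pair hS ha hc hit hac
  by_cases hjt : (j : ℕ) < t
  · exact reflTransGen_of_eq_off_pair hS ha hc hjt fun k hkj hki => hac k hki hkj
  set z : Fin n := ⟨0, by omega⟩
  have hzi : z ≠ i := fun h => hit (h ▸ ht)
  have hzj : z ≠ j := fun h => hjt (h ▸ ht)
  have hzs : (z : ℕ) < s := Nat.zero_lt_of_lt his
  suffices ∃ d ∈ S, ∃ p q : Fin n,
      (∀ k, k ≠ z → k ≠ p → a k = d k) ∧ (∀ k, k ≠ z → k ≠ q → d k = c k) by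
    obtain ⟨d, hd, p, q, had, hdc⟩ := this
    exact (reflTransGen_of_eq_off_pair hS ha hd ht had).trans
      (reflTransGen_of_eq_off_pair hS hd hc ht hdc)
  rcases Nat.lt_or_ge ((a z : ℕ) + 1) (r z) with hz | hz
  · set d := update (update c i (a i)) z ⟨a z + 1, hz⟩
    have had : ∀ k, k ≠ z → k ≠ j → a k = d k := by
      intro k hkz hkj
      by_cases hki : k = i
      · subst hki; simp [d, update_of_ne hkz]
      · simp only [d, update_of_ne hkz, update_of_ne hki, hac k hki hkj]
    have hsum : (a j : ℕ) + a z = d j + d z := by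
      simp only [d, update_of_ne hzj.symm, update_of_ne hij.symm, update_self]; omega
    refine ⟨d, hS.2 a d ha (sEquiv_of_eq_off_pair hzj.symm hjs hzs hsum
      fun k hkj hkz => had k hkz hkj), j, i, had, fun k hkz hki => ?_⟩
    simp only [d, update_of_ne hkz, update_of_ne hki]
  · set d := update (update c j (a j)) z ⟨a z - 1, by omega⟩
    have had : ∀ k, k ≠ z → k ≠ i → a k = d k := by
      intro k hkz hki
      by_cases hkj : k = j
      · subst hkj; simp [d, update_of_ne hkz]
      · simp only [d, update_of_ne hkz, update_of_ne hkj, hac k hki hkj]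
    have hz1 := hr z
    have hsum : (a i : ℕ) + a z = d i + d z := by
      simp only [d, update_of_ne hzi.symm, update_of_ne hij, update_self]; omega
    refine ⟨d, hS.2 a d ha (sEquiv_of_eq_off_pair hzi.symm his hzs hsum
      fun k hki hkz => had k hkz hki), i, j, had, fun k hkz hkj => ?_⟩
    simp only [d, update_of_ne hkz, update_of_ne hkj]

/-- Induction on how far `a` lies below `b`, measured by `∑ k, (b k - a k)`; each unit
transfer towards `b` lowers it by one. -/
theorem reflTransGen_of_sEquiv (hS : Switchable n s t r S) (ht : 0 < t) (hr : ∀ k, 2 ≤ r k)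
    {a b : Idx n r} (ha : a ∈ S) (hab : sEquiv n s r a b) : ReflTransGen (StepIn S) a b := by
  induction hm : ∑ k, ((b k : ℕ) - a k) using Nat.strong_induction_on generalizing a with
  | _ m ih =>
  by_cases heq : a = b
  · exact heq ▸ .refl
  obtain ⟨i, j, his, hjs, hi, hj⟩ := exists_lt_lt_of_sEquiv hab heq
  have hij : i ≠ j := by rintro rfl; omega
  set c := update (update a i ⟨a i + 1, by omega⟩) j ⟨a j - 1, by omega⟩
  have hci : (c i : ℕ) = a i + 1 := by simp [c, update_of_ne hij]
  have hcj : (c j : ℕ) + 1 = a j := by simp only [c, update_self]; omega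
  have hac : ∀ k, k ≠ i → k ≠ j → a k = c k := fun k hki hkj => by
    simp only [c, update_of_ne hki, update_of_ne hkj]
  have hequiv : sEquiv n s r a c := sEquiv_of_eq_off_pair hij his hjs (by omega) hac
  have hlt : ∑ k, ((b k : ℕ) - c k) < m := by
    rw [← hm]
    refine Finset.sum_lt_sum (fun k _ => ?_) ⟨i, Finset.mem_univ i, by omega⟩
    by_cases hki : k = i
    · subst hki; omega
    by_cases hkj : k = j
    · subst hkj; omega
    rw [hac k hki hkj]
  exact (reflTransGen_of_unit_transfer hS ht hr ha hij his hjs hci hcj hac).trans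
    (ih _ hlt (hS.2 a c ha hequiv) (hequiv.symm.trans hab) rfl)

theorem connectedness_class_switchable_general (n s t : ℕ) (r : Fin n → ℕ)
    (ht1 : 1 ≤ t) (hr : ∀ i, 2 ≤ r i)
    (S : Set (Idx n r)) (hS : Switchable n s t r S)
    (a₀ : Idx n r) :
    Switchable n s t r {b | ConnectedIn S a₀ b} := by
  refine ⟨fun a b ha hb hab i hi => ?_, fun a b ha hab => ?_⟩
  · exact ConnectedIn.tail_stepIn ha
      ⟨hS.1 a b ha.right_mem hb.right_mem hab i hi, hammingDist_sw_le_one i a b⟩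
  · exact ConnectedIn.trans_reflTransGen ha (reflTransGen_of_sEquiv hS ht1 hr ha.right_mem hab)

/-- every connectedness class inside an `(s,t)`-switchable set `S`
is itself an `(s,t)`-switchable set. -/
theorem connectedness_class_switchable (n s t : ℕ) (r : Fin n → ℕ)
    (hs1 : 1 ≤ s) (hsn : s ≤ n) (ht1 : 1 ≤ t) (htn : t ≤ n) (hr : ∀ i, 2 ≤ r i)
    (S : Set (Idx n r)) (hS : Switchable n s t r S)
    (a₀ : Idx n r) (ha₀ : a₀ ∈ S) :
    Switchable n s t r {b | ConnectedIn S a₀ b} :=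
  connectedness_class_switchable_general n s t r ht1 hr S hS a₀
end

section
/- For n ≥ 4, the (n−1,t)-switchable subsets of N are exactly: (1) the sets [r_1] × ⋯ × [r_{n-1}] × B for subsets B ⊆ [r_n]; and (2) the sets S such that every a ∈ S satisfies (a_1,…,a_{n-1}) = (1,…,1) or (a_1,…,a_{n-1}) = (r_1,…,r_{n-1}). -/
open Finset

/-!
Write `σ a` for the sum of the first `n - 1` entries of `a`. A switchable set is a union of
the classes `{σ = m, a last = v}`. If some `a ∈ S` is not a corner, then `0 < σ a < max σ`, and
`a` has a partner in its class differing from it in the first coordinate and one other head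
coordinate; the switch at the first coordinate (allowed since `t ≥ 1`) lands on the levels
`σ a ± 1`. Hence the whole fibre over `a last` lies in `S`. Switching any other `x ∈ S` at the
first coordinate with an element of that fibre moves `x` off the corners within its own fibre,
which is then full as well: `S` is a cylinder. Conversely, two corners of the first `n - 1`
factors either agree there or differ in all `n - 1 ≥ 3` places, so no switch applies to a set
of corners, and each corner is alone in its class.
-/

open Function

lemma forall_le_of_interior_step {P : ℕ → Prop} {m₀ R : ℕ} (h₀ : P m₀) (hpos : 0 < m₀)
    (hlt : m₀ < R) (step : ∀ m, 0 < m → m < R → P m → P (m + 1) ∧ P (m - 1)) :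
    ∀ m ≤ R, P m := by
  intro m hmR
  rcases le_total m₀ m with h | h
  · induction m, h using Nat.le_induction with
    | base => exact h₀
    | succ m hm ih => exact (step m (by omega) (by omega) (ih (by omega))).1
  · induction h using Nat.decreasingInduction with
    | self => exact h₀
    | of_succ m hm ih => simpa using (step (m + 1) (by omega) (by omega) (ih (by omega))).2

section HeadSum

variable {n s : ℕ} {r : Fin n → ℕ}

def headSum (s : ℕ) (a : Idx n r) : ℕ :=
  ∑ i ∈ univ.filter (fun i : Fin n => (i : ℕ) < s), (a i : ℕ)

def maxHeadSum (s : ℕ) (r : Fin n → ℕ) : ℕ :=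
  ∑ i ∈ univ.filter (fun i : Fin n => (i : ℕ) < s), (r i - 1)

def IsHeadCorner (s : ℕ) (a : Idx n r) : Prop :=
  (∀ i : Fin n, (i : ℕ) < s → (a i : ℕ) = 0) ∨ (∀ i : Fin n, (i : ℕ) < s → (a i : ℕ) = r i - 1)

lemma headSum_le_maxHeadSum (a : Idx n r) : headSum s a ≤ maxHeadSum s r :=
  sum_le_sum fun i _ => Nat.le_sub_one_of_lt (a i).isLt

lemma headSum_eq_zero_iff {a : Idx n r} :
    headSum s a = 0 ↔ ∀ i : Fin n, (i : ℕ) < s → (a i : ℕ) = 0 := by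
  simp [headSum, sum_eq_zero_iff]

lemma headSum_eq_maxHeadSum_iff {a : Idx n r} :
    headSum s a = maxHeadSum s r ↔ ∀ i : Fin n, (i : ℕ) < s → (a i : ℕ) = r i - 1 := by
  rw [headSum, maxHeadSum, sum_eq_sum_iff_of_le fun i _ => Nat.le_sub_one_of_lt (a i).isLt]
  simp

lemma not_isHeadCorner_iff {a : Idx n r} :
    ¬ IsHeadCorner s a ↔ 0 < headSum s a ∧ headSum s a < maxHeadSum s r := by
  rw [IsHeadCorner, ← headSum_eq_zero_iff, ← headSum_eq_maxHeadSum_iff]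
  have := headSum_le_maxHeadSum (s := s) a
  omega

lemma headSum_update_add {i : Fin n} (hi : (i : ℕ) < s) (a : Idx n r) (x : Fin (r i)) :
    headSum s (update a i x) + a i = headSum s a + x := by
  have hmem : i ∈ univ.filter (fun i : Fin n => (i : ℕ) < s) := by simpa using hi
  have hval : (fun j => (update a i x j : ℕ)) = update (fun j => (a j : ℕ)) i x :=
    funext fun j => apply_update (fun j (y : Fin (r j)) => (y : ℕ)) a i x j
  rw [headSum, headSum, hval, sum_update_of_mem hmem, ← add_sum_erase _ _ hmem,
    sdiff_singleton_eq_erase]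
  ring

lemma two_le_maxHeadSum {z k : Fin n} (hzk : z ≠ k) (hzs : (z : ℕ) < s) (hks : (k : ℕ) < s)
    (hz : 2 ≤ r z) (hk : 2 ≤ r k) : 2 ≤ maxHeadSum s r := by
  have hsub : {z, k} ⊆ univ.filter (fun i : Fin n => (i : ℕ) < s) := by
    simp [insert_subset_iff, hzs, hks]
  have := sum_le_sum_of_subset (f := fun i => r i - 1) hsub
  rw [sum_pair hzk] at this
  unfold maxHeadSum
  omega

lemma exists_exchange_partner {a : Idx n r} {z k : Fin n}
    (hr : ∀ i, 2 ≤ r i) (hzk : z ≠ k) (hks : (k : ℕ) < s)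
    (hpos : 0 < headSum s a) (hlt : headSum s a < maxHeadSum s r) :
    ∃ j : Fin n, (j : ℕ) < s ∧ z ≠ j ∧
      ((a z + 1 < r z ∧ 0 < (a j : ℕ)) ∨ (0 < (a z : ℕ) ∧ a j + 1 < r j)) := by
  obtain ⟨p, hps, hp⟩ : ∃ p : Fin n, (p : ℕ) < s ∧ 0 < (a p : ℕ) := by
    by_contra! h
    exact hpos.ne' (headSum_eq_zero_iff.2 fun i hi => Nat.le_zero.1 (h i hi))
  obtain ⟨q, hqs, hq⟩ : ∃ q : Fin n, (q : ℕ) < s ∧ a q + 1 < r q := by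
    by_contra! h
    exact hlt.ne (headSum_eq_maxHeadSum_iff.2 fun i hi => by have := (a i).isLt; grind)
  have := (a z).isLt
  have := hr z
  have := hr k
  by_cases hz0 : (a z : ℕ) = 0
  · exact ⟨p, hps, by rintro rfl; omega, .inl ⟨by omega, hp⟩⟩
  by_cases hztop : a z + 1 = r z
  · exact ⟨q, hqs, by rintro rfl; omega, .inr ⟨by omega, hq⟩⟩
  by_cases hk0 : (a k : ℕ) = 0
  · exact ⟨k, hks, hzk, .inr ⟨by omega, by omega⟩⟩
  · exact ⟨k, hks, hzk, .inl ⟨by omega, by omega⟩⟩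

lemma exists_update_headSum_pos_lt (hr : ∀ i, 2 ≤ r i) {z k : Fin n}
    (hzk : z ≠ k) (hzs : (z : ℕ) < s) (hks : (k : ℕ) < s) (x : Idx n r) :
    ∃ c : Fin (r z), 0 < headSum s (update x z c) ∧ headSum s (update x z c) < maxHeadSum s r := by
  have h2 := two_le_maxHeadSum hzk hzs hks (hr z) (hr k)
  have hrz := hr z
  let y := update x z ⟨0, by omega⟩
  have hy (c : Fin (r z)) : headSum s (update x z c) = headSum s y + c := by
    have := headSum_update_add hzs y c
    simpa [y] using this
  have htop : headSum s y + (r z - 1) ≤ maxHeadSum s r :=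
    hy ⟨r z - 1, by omega⟩ ▸ headSum_le_maxHeadSum _
  by_cases h0 : headSum s y = 0
  · exact ⟨⟨1, by omega⟩, by simp only [hy]; omega⟩
  · exact ⟨⟨0, by omega⟩, by simp only [hy]; omega⟩

end HeadSum

section Hamming

variable {n s : ℕ} {r : Fin n → ℕ}

lemma sw_eq_update (i : Fin n) (a b : Idx n r) : sw i a b = update a i (b i) := by
  funext j
  by_cases h : j = i
  · subst h; simp [sw]
  · simp [sw, h]

lemma hammingDist_update_update {a : Idx n r} {i j : Fin n} (hij : i ≠ j) {x : Fin (r i)}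
    {y : Fin (r j)} (hx : x ≠ a i) (hy : y ≠ a j) :
    hammingDist a (update (update a i x) j y) = 2 := by
  have : univ.filter (fun k => a k ≠ update (update a i x) j y k) = {i, j} := by
    ext k
    by_cases hki : k = i
    · subst hki; simp [update_of_ne hij, hx.symm]
    · by_cases hkj : k = j
      · subst hkj; simp [hy.symm]
      · simp [hki, hkj]
  rw [hammingDist, this, card_pair hij]

lemma hammingDist_le_of_forall_lt_eq {a b : Idx n r}
    (h : ∀ i : Fin n, (i : ℕ) < s → a i = b i) : hammingDist a b ≤ n - s := by
  calc hammingDist a b ≤ #(univ.filter fun i : Fin n => ¬ (i : ℕ) < s) :=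
        card_le_card fun i hi => by
          simp only [mem_filter, mem_univ, true_and] at hi ⊢
          exact mt (h i) hi
    _ = n - s := by
        rw [filter_not, card_sdiff_of_subset (filter_subset _ _), Fin.card_filter_val_lt]
        simp only [card_univ, Fintype.card_fin]
        omega

lemma le_hammingDist_of_forall_lt_ne {a b : Idx n r} (hsn : s ≤ n)
    (h : ∀ i : Fin n, (i : ℕ) < s → a i ≠ b i) : s ≤ hammingDist a b := by
  calc s = #(univ.filter fun i : Fin n => (i : ℕ) < s) := by
        rw [Fin.card_filter_val_lt]; omega
    _ ≤ hammingDist a b :=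
        card_le_card fun i hi => by
          simp only [mem_filter, mem_univ, true_and] at hi ⊢
          exact h i hi

end Hamming

section Corner

variable {n s t : ℕ} {r : Fin n → ℕ}

lemma IsHeadCorner.eq_of_sEquiv {a b : Idx n r} (ha : IsHeadCorner s a)
    (hab : sEquiv n s r a b) : b = a := by
  have hhead : ∀ i : Fin n, (i : ℕ) < s → (b i : ℕ) = a i := by
    rcases ha with ha | ha
    · have hb := headSum_eq_zero_iff.1 (hab.1.symm.trans (headSum_eq_zero_iff.2 ha))
      exact fun i hi => (hb i hi).trans (ha i hi).symm
    · have hb := headSum_eq_maxHeadSum_iff.1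
        (hab.1.symm.trans (headSum_eq_maxHeadSum_iff.2 ha))
      exact fun i hi => (hb i hi).trans (ha i hi).symm
  funext i
  by_cases hi : (i : ℕ) < s
  · exact Fin.ext (hhead i hi)
  · exact (hab.2 i (not_lt.1 hi)).symm

lemma IsHeadCorner.forall_eq_or_forall_ne (hr : ∀ i, 2 ≤ r i) {a b : Idx n r}
    (ha : IsHeadCorner s a) (hb : IsHeadCorner s b) :
    (∀ i : Fin n, (i : ℕ) < s → a i = b i) ∨ (∀ i : Fin n, (i : ℕ) < s → a i ≠ b i) := by
  rcases ha with ha | ha <;> rcases hb with hb | hb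
  · exact .inl fun i hi => Fin.ext ((ha i hi).trans (hb i hi).symm)
  · exact .inr fun i hi h => by have := hr i; have := congrArg Fin.val h; grind
  · exact .inr fun i hi h => by have := hr i; have := congrArg Fin.val h; grind
  · exact .inl fun i hi => Fin.ext ((ha i hi).trans (hb i hi).symm)

lemma switchable_setOf_apply_mem {l : Fin n} (hl : s ≤ l) (B : Set (Fin (r l))) :
    Switchable n s t r {a | a l ∈ B} := by
  refine ⟨fun a b ha hb _ i _ => ?_, fun a b ha hab => ?_⟩
  · show sw i a b l ∈ B
    rw [sw_eq_update]
    by_cases hli : l = i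
    · subst hli; simpa using hb
    · simpa [update_of_ne hli] using ha
  · show b l ∈ B
    rwa [← hab.2 l hl]

lemma switchable_of_forall_isHeadCorner (hn : 4 ≤ n) (hr : ∀ i, 2 ≤ r i) {S : Set (Idx n r)}
    (hS : ∀ a ∈ S, IsHeadCorner (n - 1) a) : Switchable n (n - 1) t r S := by
  refine ⟨fun a b ha hb hab _ _ => ?_, fun a b ha hab => (hS a ha).eq_of_sEquiv hab ▸ ha⟩
  rcases (hS a ha).forall_eq_or_forall_ne hr (hS b hb) with h | h
  · have := hammingDist_le_of_forall_lt_eq h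
    omega
  · have := le_hammingDist_of_forall_lt_ne (by omega) h
    omega

end Corner

def MeetsLevel {n : ℕ} {r : Fin n → ℕ} (S : Set (Idx n r)) (s : ℕ) (a : Idx n r) (m : ℕ) : Prop :=
  ∃ b ∈ S, headSum s b = m ∧ ∀ i : Fin n, s ≤ (i : ℕ) → b i = a i

namespace Switchable

variable {n s t : ℕ} {r : Fin n → ℕ} {S : Set (Idx n r)}

lemma update_mem_of_update_update_mem (hS : Switchable n s t r S) {a : Idx n r} {i j : Fin n}
    (hij : i ≠ j) (hit : (i : ℕ) < t) {x : Fin (r i)} {y : Fin (r j)} (hx : x ≠ a i)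
    (hy : y ≠ a j) (ha : a ∈ S) (hb : update (update a i x) j y ∈ S) :
    update a i x ∈ S ∧ update a j y ∈ S := by
  have hdist := hammingDist_update_update hij hx hy
  constructor
  · have h := hS.1 _ _ ha hb hdist i hit
    rwa [sw_eq_update, update_of_ne hij, update_self] at h
  · have h := hS.1 _ _ hb ha (by rwa [hammingDist_comm]) i hit
    rwa [sw_eq_update, update_comm hij.symm, update_idem, update_eq_self] at h

/-- Moving weight between two head coordinates stays in the same `s`-equivalence class, so the
switch at the first of them yields both one-coordinate changes. -/
lemma update_mem_of_add_eq (hS : Switchable n s t r S) {a : Idx n r} (ha : a ∈ S) {i j : Fin n}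
    (hij : i ≠ j) (hit : (i : ℕ) < t) (his : (i : ℕ) < s) (hjs : (j : ℕ) < s)
    {x : Fin (r i)} {y : Fin (r j)} (hx : x ≠ a i) (hxy : (x : ℕ) + y = a i + a j) :
    update a i x ∈ S ∧ update a j y ∈ S := by
  have hy : y ≠ a j := fun h => hx (Fin.ext (by rw [h] at hxy; omega))
  refine hS.update_mem_of_update_update_mem hij hit hx hy ha (hS.2 a _ ha ⟨?_, fun k hk => ?_⟩)
  · have h₁ := headSum_update_add his a x
    have h₂ := headSum_update_add hjs (update a i x) y
    rw [update_of_ne hij.symm] at h₂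
    change headSum s a = headSum s _
    omega
  · rw [update_of_ne (by rintro rfl; omega), update_of_ne (by rintro rfl; omega)]

lemma meetsLevel_of_update_mem {a c : Idx n r} (hc : ∀ i : Fin n, s ≤ (i : ℕ) → c i = a i)
    {i : Fin n} (his : (i : ℕ) < s) {x : Fin (r i)} (h : update c i x ∈ S) {m : ℕ}
    (hm : m + c i = headSum s c + x) : MeetsLevel S s a m :=
  ⟨_, h, by have := headSum_update_add his c x; omega,
    fun k hk => by rw [update_of_ne (by rintro rfl; omega)]; exact hc k hk⟩

lemma meetsLevel_succ_and_pred (hS : Switchable n s t r S) (hr : ∀ i, 2 ≤ r i) {z k : Fin n}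
    (hzk : z ≠ k) (hzt : (z : ℕ) < t) (hzs : (z : ℕ) < s) (hks : (k : ℕ) < s) {a : Idx n r}
    {m : ℕ} (hm : MeetsLevel S s a m) (hpos : 0 < m) (hlt : m < maxHeadSum s r) :
    MeetsLevel S s a (m + 1) ∧ MeetsLevel S s a (m - 1) := by
  obtain ⟨c, hcS, rfl, hc⟩ := hm
  obtain ⟨j, hjs, hzj, ⟨hz, hj⟩ | ⟨hz, hj⟩⟩ := exists_exchange_partner hr hzk hks hpos hlt
  · obtain ⟨hup, hdown⟩ := hS.update_mem_of_add_eq hcS hzj hzt hzs hjs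
      (x := ⟨c z + 1, hz⟩) (y := ⟨c j - 1, by omega⟩)
      (Fin.ne_of_val_ne (by dsimp only; omega)) (by dsimp only; omega)
    exact ⟨meetsLevel_of_update_mem hc hzs hup (by dsimp only; omega),
      meetsLevel_of_update_mem hc hjs hdown (by dsimp only; omega)⟩
  · obtain ⟨hdown, hup⟩ := hS.update_mem_of_add_eq hcS hzj hzt hzs hjs
      (x := ⟨c z - 1, by omega⟩) (y := ⟨c j + 1, hj⟩)
      (Fin.ne_of_val_ne (by dsimp only; omega)) (by dsimp only; omega)
    exact ⟨meetsLevel_of_update_mem hc hjs hup (by dsimp only; omega),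
      meetsLevel_of_update_mem hc hzs hdown (by dsimp only; omega)⟩

lemma mem_of_forall_le_eq (hS : Switchable n s t r S) (hr : ∀ i, 2 ≤ r i) {z k : Fin n}
    (hzk : z ≠ k) (hzt : (z : ℕ) < t) (hzs : (z : ℕ) < s) (hks : (k : ℕ) < s) {a : Idx n r}
    (ha : a ∈ S) (hpos : 0 < headSum s a) (hlt : headSum s a < maxHeadSum s r) {b : Idx n r}
    (hb : ∀ i : Fin n, s ≤ (i : ℕ) → b i = a i) : b ∈ S := by
  have hlevel : ∀ m ≤ maxHeadSum s r, MeetsLevel S s a m :=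
    forall_le_of_interior_step ⟨a, ha, rfl, fun _ _ => rfl⟩ hpos hlt
      fun _ hm₀ hmR hm => hS.meetsLevel_succ_and_pred hr hzk hzt hzs hks hm hm₀ hmR
  obtain ⟨c, hcS, hcb, hca⟩ := hlevel _ (headSum_le_maxHeadSum b)
  exact hS.2 c b hcS ⟨hcb, fun i hi => (hca i hi).trans (hb i hi).symm⟩

lemma update_mem_of_forall_apply_eq_mem (hS : Switchable n s t r S) {l : Fin n} {v : Fin (r l)}
    (hfib : ∀ b : Idx n r, b l = v → b ∈ S) {x : Idx n r} (hx : x ∈ S) {z : Fin n}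
    (hzl : z ≠ l) (hzt : (z : ℕ) < t) (c : Fin (r z)) : update x z c ∈ S := by
  by_cases hc : c = x z
  · rwa [hc, update_eq_self]
  by_cases hv : v = x l
  · exact hfib _ (by rw [update_of_ne hzl.symm, hv])
  · exact (hS.update_mem_of_update_update_mem hzl hzt hc hv hx (hfib _ (update_self ..))).1

lemma mem_of_apply_last_eq (hS : Switchable n (n - 1) t r S) (hn : 3 ≤ n) (ht : 1 ≤ t)
    (hr : ∀ i, 2 ≤ r i) {last : Fin n} (hlast : (last : ℕ) = n - 1) {a₀ : Idx n r}
    (ha₀ : a₀ ∈ S) (hint : ¬ IsHeadCorner (n - 1) a₀) {x b : Idx n r} (hx : x ∈ S)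
    (hb : b last = x last) : b ∈ S := by
  let z : Fin n := ⟨0, by omega⟩
  let k : Fin n := ⟨1, by omega⟩
  have hzk : z ≠ k := Fin.ne_of_val_ne zero_ne_one
  have hzs : (z : ℕ) < n - 1 := show 0 < n - 1 by omega
  have hks : (k : ℕ) < n - 1 := show 1 < n - 1 by omega
  have hzt : (z : ℕ) < t := show 0 < t by omega
  have hzl : z ≠ last := fun h => by rw [h] at hzs; omega
  have htail {a b : Idx n r} (h : b last = a last) (i : Fin n) (hi : n - 1 ≤ (i : ℕ)) :
      b i = a i := by
    obtain rfl : i = last := Fin.ext (by omega)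
    exact h
  obtain ⟨hpos, hlt⟩ := not_isHeadCorner_iff.1 hint
  have hfib : ∀ b : Idx n r, b last = a₀ last → b ∈ S := fun b hb =>
    hS.mem_of_forall_le_eq hr hzk hzt hzs hks ha₀ hpos hlt (htail hb)
  obtain ⟨c, hcpos, hclt⟩ := exists_update_headSum_pos_lt hr hzk hzs hks x
  exact hS.mem_of_forall_le_eq hr hzk hzt hzs hks
    (hS.update_mem_of_forall_apply_eq_mem hfib hx hzl hzt c) hcpos hclt
    (htail (by rw [update_of_ne hzl.symm]; exact hb))

end Switchable

theorem switchable_classification_s_eq_n_sub_one_general (n t : ℕ) (r : Fin n → ℕ)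
    (hn : 4 ≤ n) (ht1 : 1 ≤ t) (hr : ∀ i, 2 ≤ r i)
    (last : Fin n) (hlast : (last : ℕ) = n - 1)
    (S : Set (Idx n r)) :
    Switchable n (n - 1) t r S ↔
      ((∃ B : Set (Fin (r last)), S = {a : Idx n r | a last ∈ B}) ∨
        (∀ a ∈ S, (∀ i : Fin n, (i : ℕ) < n - 1 → (a i : ℕ) = 0) ∨
          (∀ i : Fin n, (i : ℕ) < n - 1 → (a i : ℕ) = r i - 1))) := by
  constructor
  · intro hS
    by_cases hcorner : ∀ a ∈ S, IsHeadCorner (n - 1) a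
    · exact .inr hcorner
    obtain ⟨a₀, ha₀, hint⟩ : ∃ a ∈ S, ¬ IsHeadCorner (n - 1) a := by simpa using hcorner
    refine .inl ⟨(· last) '' S, Set.ext fun b => ⟨fun hb => ⟨b, hb, rfl⟩, ?_⟩⟩
    rintro ⟨x, hx, hxb⟩
    exact hS.mem_of_apply_last_eq (by omega) ht1 hr hlast ha₀ hint hx hxb.symm
  · rintro (⟨B, rfl⟩ | hcorner)
    · exact switchable_setOf_apply_mem (by omega) B
    · exact switchable_of_forall_isHeadCorner hn hr hcorner

/-- for `n ≥ 4`, the `(n−1,t)`-switchable sets are exactly (1) the cylinders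
over a subset `B` of the last factor, and (2) the sets all of whose elements have their
first `n−1` components all `1` or all maximal. -/
theorem switchable_classification_s_eq_n_sub_one (n t : ℕ) (r : Fin n → ℕ)
    (hn : 4 ≤ n) (ht1 : 1 ≤ t) (htn : t ≤ n) (hr : ∀ i, 2 ≤ r i)
    (last : Fin n) (hlast : (last : ℕ) = n - 1)
    (S : Set (Idx n r)) :
    Switchable n (n - 1) t r S ↔
      ((∃ B : Set (Fin (r last)), S = {a : Idx n r | a last ∈ B}) ∨
        (∀ a ∈ S, (∀ i : Fin n, (i : ℕ) < n - 1 → (a i : ℕ) = 0) ∨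
          (∀ i : Fin n, (i : ℕ) < n - 1 → (a i : ℕ) = r i - 1))) :=
  switchable_classification_s_eq_n_sub_one_general n t r hn ht1 hr last hlast S
end
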